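/- arXiv:2211.07419 — 2 statements merged into one kernel-verified Lean document; each statement's English description precedes it below -/
import Mathlib

section
/- Consider a finite-horizon MDP with horizon H and finite state space, where each action set A(s_h) is the closed Euclidean ball B₂(ρ(s_h)) ⊂ ℝ^d, features satisfy φ(s,a) = φ(s) + a, and Q_h^*(s,a) = ⟨φ(s) + a, θ_h^*⟩ for parameters θ_1^*, …, θ_H^* all of Euclidean norm Θ. Suppose θ̂₁, …, θ̂_H satisfy ‖θ̂_h − θ_h^*‖₂ ≤ ε_h, and let π be the greedy policy π(s_h) = argmax_{a ∈ B₂(ρ(s_h))} ⟨φ(s_h) + a, θ̂_h⟩. Then V₁^*(s₁) − V₁^π(s₁) ≤ 2·Σ_{h=1}^H E^π[ρ(s_h)]·ε_h, where E^π denotes expectation over trajectories generated by π starting from s₁. -/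
open scoped RealInnerProductSpace
open Finset

/-- Value function of a (non-stationary, deterministic) policy `π` in a finite-horizon MDP
over a finite state space, with `V_{H+1} ≡ 0`. -/
noncomputable def Vpol {S : Type*} [Fintype S] {d : ℕ} (H : ℕ)
    (P : S → EuclideanSpace ℝ (Fin d) → S → ℝ) (r : S → EuclideanSpace ℝ (Fin d) → ℝ)
    (π : ℕ → S → EuclideanSpace ℝ (Fin d)) : ℕ → S → ℝ :=
  fun h s =>
    if _hle : h ≤ H then
      r s (π h s) + ∑ s' : S, P s (π h s) s' * Vpol H P r π (h + 1) s'
    else 0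
termination_by h => H + 1 - h

/-- `stateDist P π s₁ n s` is the probability that the state at step `n + 1` is `s`, for
trajectories generated by the policy `π` started at `s₁`. -/
noncomputable def stateDist {S : Type*} [Fintype S] [DecidableEq S] {d : ℕ}
    (P : S → EuclideanSpace ℝ (Fin d) → S → ℝ)
    (π : ℕ → S → EuclideanSpace ℝ (Fin d)) (s₁ : S) : ℕ → S → ℝ
  | 0 => fun s => if s = s₁ then 1 else 0
  | n + 1 => fun s' => ∑ s : S, stateDist P π s₁ n s * P s (π (n + 1) s) s'

/-- The optimal value function under the linear-`Q^*` + ball-action assumptions: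
`V_h^*(s) = max_{‖a‖ ≤ ρ(s)} ⟨φ(s) + a, θ_h^*⟩ = ⟨φ(s), θ_h^*⟩ + ρ(s)·‖θ_h^*‖`,
with `V_{H+1}^* ≡ 0`. -/
noncomputable def Vstar {S : Type*} {d : ℕ} (H : ℕ) (φ : S → EuclideanSpace ℝ (Fin d))
    (ρ : S → ℝ) (θ : ℕ → EuclideanSpace ℝ (Fin d)) : ℕ → S → ℝ :=
  fun h s => if h ≤ H then ⟪φ s, θ h⟫ + ρ s * ‖θ h‖ else 0

/-- Lemma 2 of the paper: value error of the greedy policy. Under the linear `Q^*`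
assumption with ball action sets `B₂(ρ(s))`, features `φ(s,a) = φ(s) + a`, parameters
`θ_h^*` of common norm `Θ`, and estimates `θ̂_h` with `‖θ̂_h − θ_h^*‖ ≤ ε_h`, the greedy
policy `π` w.r.t. the `θ̂_h` satisfies
`V₁^*(s₁) − V₁^π(s₁) ≤ 2 Σ_{h=1}^H E^π[ρ(s_h)]·ε_h`. -/
theorem greedy_policy_value_error {S : Type*} [Fintype S] [DecidableEq S] {d : ℕ} (H : ℕ)
    (φ : S → EuclideanSpace ℝ (Fin d)) (ρ : S → ℝ) (hρ : ∀ s, 0 ≤ ρ s)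
    (P : S → EuclideanSpace ℝ (Fin d) → S → ℝ) (r : S → EuclideanSpace ℝ (Fin d) → ℝ)
    (hP0 : ∀ s a s', 0 ≤ P s a s') (hP1 : ∀ s a, ∑ s' : S, P s a s' = 1)
    (θ : ℕ → EuclideanSpace ℝ (Fin d)) (Θ : ℝ)
    (hΘ : ∀ h, 1 ≤ h → h ≤ H → ‖θ h‖ = Θ)
    -- linear Q* assumption together with the Bellman optimality equation:
    -- Q_h^*(s,a) = ⟨φ(s)+a, θ_h^*⟩ = r(s,a) + Σ_{s'} P(s'|s,a) V_{h+1}^*(s')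
    (hbellman : ∀ h, 1 ≤ h → h ≤ H → ∀ s a, ‖a‖ ≤ ρ s →
      ⟪φ s + a, θ h⟫ = r s a + ∑ s' : S, P s a s' * Vstar H φ ρ θ (h + 1) s')
    (θhat : ℕ → EuclideanSpace ℝ (Fin d)) (ε : ℕ → ℝ)
    (hest : ∀ h, 1 ≤ h → h ≤ H → ‖θhat h - θ h‖ ≤ ε h)
    (π : ℕ → S → EuclideanSpace ℝ (Fin d))
    (hπball : ∀ h s, ‖π h s‖ ≤ ρ s)
    -- π is the greedy policy with respect to the estimates θ̂_h
    (hgreedy : ∀ h, 1 ≤ h → h ≤ H → ∀ s, ∀ a, ‖a‖ ≤ ρ s →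
      ⟪φ s + a, θhat h⟫ ≤ ⟪φ s + π h s, θhat h⟫)
    (s₁ : S) :
    Vstar H φ ρ θ 1 s₁ - Vpol H P r π 1 s₁ ≤
      2 * ∑ h ∈ Finset.Icc 1 H, (∑ s : S, stateDist P π s₁ (h - 1) s * ρ s) * ε h := by

  -- abbreviations
  have hεnn : ∀ h, 1 ≤ h → h ≤ H → 0 ≤ ε h :=
    fun h h1 h2 => le_trans (norm_nonneg _) (hest h h1 h2)
  have hD0 : ∀ n (s : S), 0 ≤ stateDist P π s₁ n s := by
    intro n
    induction n with
    | zero => intro s; simp only [stateDist]; split <;> norm_num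
    | succ n ih =>
      intro s
      simp only [stateDist]
      exact Finset.sum_nonneg fun s' _ => mul_nonneg (ih s') (hP0 _ _ _)
  -- per-state instantaneous gap bound
  have gap : ∀ h, 1 ≤ h → h ≤ H → ∀ s : S,
      ρ s * ‖θ h‖ - ⟪π h s, θ h⟫ ≤ 2 * (ρ s * ε h) := by
    intro h h1 h2 s
    have hε := hest h h1 h2
    have hεn := hεnn h h1 h2
    by_cases hθ0 : θ h = 0
    · simp only [hθ0, norm_zero, mul_zero, inner_zero_right, sub_zero]
      have := mul_nonneg (hρ s) hεn
      linarith
    · set a : EuclideanSpace ℝ (Fin d) := (ρ s / ‖θ h‖) • θ h with ha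
      have hθn : (0:ℝ) < ‖θ h‖ := norm_pos_iff.mpr hθ0
      have hna : ‖a‖ = ρ s := by
        rw [ha, norm_smul, Real.norm_eq_abs, abs_div, abs_of_nonneg (hρ s),
          abs_of_nonneg (norm_nonneg _)]
        field_simp
      have haθ : ⟪a, θ h⟫ = ρ s * ‖θ h‖ := by
        rw [ha, real_inner_smul_left, real_inner_self_eq_norm_sq]
        field_simp
      have hc1 : ⟪a, θ h - θhat h⟫ ≤ ρ s * ε h := by
        calc ⟪a, θ h - θhat h⟫ ≤ ‖a‖ * ‖θ h - θhat h‖ := real_inner_le_norm _ _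
          _ = ρ s * ‖θhat h - θ h‖ := by rw [hna, norm_sub_rev]
          _ ≤ ρ s * ε h := mul_le_mul_of_nonneg_left hε (hρ s)
      have hc2 : ⟪π h s, θhat h - θ h⟫ ≤ ρ s * ε h := by
        calc ⟪π h s, θhat h - θ h⟫ ≤ ‖π h s‖ * ‖θhat h - θ h‖ := real_inner_le_norm _ _
          _ ≤ ρ s * ε h :=
            mul_le_mul (hπball h s) hε (norm_nonneg _) (hρ s)
      have hgr := hgreedy h h1 h2 s a hna.le
      rw [inner_add_left, inner_add_left] at hgr
      have e1 : ⟪a, θ h⟫ = ⟪a, θhat h⟫ + ⟪a, θ h - θhat h⟫ := by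
        rw [inner_sub_right]; ring
      have e2 : ⟪π h s, θhat h⟫ = ⟪π h s, θ h⟫ + ⟪π h s, θhat h - θ h⟫ := by
        rw [inner_sub_right]; ring
      linarith [haθ]
  -- per-step value recursion bound
  have lemA : ∀ h, 1 ≤ h → h ≤ H → ∀ s : S,
      (Vstar H φ ρ θ h s - Vpol H P r π h s)
        - ∑ s' : S, P s (π h s) s' *
            (Vstar H φ ρ θ (h+1) s' - Vpol H P r π (h+1) s')
        ≤ 2 * (ρ s * ε h) := by
    intro h h1 h2 s
    have hb := hbellman h h1 h2 s (π h s) (hπball h s)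
    rw [inner_add_left] at hb
    have hVs : Vstar H φ ρ θ h s = ⟪φ s, θ h⟫ + ρ s * ‖θ h‖ := by
      simp [Vstar, h2]
    have hVp : Vpol H P r π h s
        = r s (π h s) + ∑ s' : S, P s (π h s) s' * Vpol H P r π (h+1) s' := by
      rw [Vpol]; simp [h2]
    have hsplit : ∑ s' : S, P s (π h s) s' *
          (Vstar H φ ρ θ (h+1) s' - Vpol H P r π (h+1) s')
        = (∑ s' : S, P s (π h s) s' * Vstar H φ ρ θ (h+1) s')
          - ∑ s' : S, P s (π h s) s' * Vpol H P r π (h+1) s' := by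
      rw [← Finset.sum_sub_distrib]
      exact Finset.sum_congr rfl fun s' _ => by ring
    have := gap h h1 h2 s
    rw [hVs, hVp, hsplit]
    linarith
  -- f h : expected gap at step h
  set D : ℕ → S → ℝ := fun n => stateDist P π s₁ n with hDdef
  set f : ℕ → ℝ := fun h =>
    ∑ s : S, D (h-1) s * (Vstar H φ ρ θ h s - Vpol H P r π h s) with hfdef
  have hstep : ∀ i ∈ Finset.range H,
      f (i+1) - f (i+2) ≤ 2 * ((∑ s : S, D i s * ρ s) * ε (i+1)) := by
    intro i hi
    rw [Finset.mem_range] at hi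
    have h1 : 1 ≤ i + 1 := Nat.le_add_left 1 i
    have h2 : i + 1 ≤ H := hi
    have hf2 : f (i+2) = ∑ s : S, D i s *
        ∑ s' : S, P s (π (i+1) s) s' *
          (Vstar H φ ρ θ (i+2) s' - Vpol H P r π (i+2) s') := by
      have hDsucc : ∀ s' : S, D (i+1) s'
          = ∑ s : S, D i s * P s (π (i+1) s) s' := by
        intro s'; simp [hDdef, stateDist]
      simp only [hfdef]
      have : (i + 2) - 1 = i + 1 := rfl
      rw [this]
      rw [Finset.sum_congr rfl fun s' _ => by rw [hDsucc s']]
      simp_rw [Finset.sum_mul, Finset.mul_sum]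
      rw [Finset.sum_comm]
      exact Finset.sum_congr rfl fun s _ => Finset.sum_congr rfl fun s' _ => by ring
    have hf1 : f (i+1) = ∑ s : S, D i s *
        (Vstar H φ ρ θ (i+1) s - Vpol H P r π (i+1) s) := by
      simp only [hfdef]; norm_num
    rw [hf1, hf2, ← Finset.sum_sub_distrib]
    have hle : ∀ s : S, D i s * (Vstar H φ ρ θ (i+1) s - Vpol H P r π (i+1) s)
        - D i s * ∑ s' : S, P s (π (i+1) s) s' *
            (Vstar H φ ρ θ (i+2) s' - Vpol H P r π (i+2) s')
        ≤ D i s * (2 * (ρ s * ε (i+1))) := by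
      intro s
      rw [← mul_sub]
      exact mul_le_mul_of_nonneg_left (lemA (i+1) h1 h2 s) (hD0 i s)
    calc ∑ s : S, (D i s * (Vstar H φ ρ θ (i+1) s - Vpol H P r π (i+1) s)
          - D i s * ∑ s' : S, P s (π (i+1) s) s' *
              (Vstar H φ ρ θ (i+2) s' - Vpol H P r π (i+2) s'))
        ≤ ∑ s : S, D i s * (2 * (ρ s * ε (i+1))) :=
          Finset.sum_le_sum fun s _ => hle s
      _ = 2 * ((∑ s : S, D i s * ρ s) * ε (i+1)) := by
          simp only [Finset.mul_sum, Finset.sum_mul]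
          exact Finset.sum_congr rfl fun s _ => by ring
  -- telescoping
  have htel : f 1 - f (H+1) = ∑ i ∈ Finset.range H, (f (i+1) - f (i+2)) := by
    have := Finset.sum_range_sub' (f := fun i => f (i+1)) H
    simpa using this.symm
  have hfH1 : f (H+1) = 0 := by
    simp only [hfdef]
    apply Finset.sum_eq_zero
    intro s _
    have h1 : Vstar H φ ρ θ (H+1) s = 0 := by simp [Vstar]
    have h2 : Vpol H P r π (H+1) s = 0 := by rw [Vpol]; simp
    rw [h1, h2]; ring
  have hf1 : f 1 = Vstar H φ ρ θ 1 s₁ - Vpol H P r π 1 s₁ := by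
    simp only [hfdef]
    have : D 0 = fun s => if s = s₁ then 1 else 0 := by
      funext s; simp [hDdef, stateDist]
    rw [show (1:ℕ) - 1 = 0 from rfl, this]
    rw [Finset.sum_eq_single s₁]
    · simp
    · intro b _ hb; simp [hb]
    · intro h; exact absurd (Finset.mem_univ s₁) h
  have hsum : ∑ h ∈ Finset.Icc 1 H, (∑ s : S, stateDist P π s₁ (h - 1) s * ρ s) * ε h
      = ∑ i ∈ Finset.range H, (∑ s : S, D i s * ρ s) * ε (i+1) := by
    rw [show Finset.Icc 1 H = Finset.Ico 1 (H+1) by rw [Finset.Ico_add_one_right_eq_Icc],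
      Finset.sum_Ico_eq_sum_range]
    simp only [Nat.add_sub_cancel, hDdef]
    apply Finset.sum_congr rfl
    intro i _
    rw [Nat.add_comm 1 i]
    simp
  rw [← hf1, hsum, ← sub_zero (f 1), ← hfH1, htel, Finset.mul_sum]
  exact Finset.sum_le_sum hstep
end

section
/- Consider a finite-horizon MDP with horizon H, finite state space, ball action sets A(s) = B₂(ρ(s)) ⊂ ℝ^d with φ(s,a) = φ(s) + a, and Q_h^*(s,a) = ⟨φ(s)+a, θ_h^*⟩ where ‖θ_1^*‖₂ = ⋯ = ‖θ_H^*‖₂ = Θ. Then for every deterministic policy π and initial state s₁: ⟨φ(s₁), θ₁^*⟩ + E^π[Σ_{h=1}^H ⟨a_h, θ_h^*⟩] = E^π[Σ_{h=1}^H r(s_h, a_h)] + Θ·E^π[Σ_{h=1}^{H−1} ρ(s_{h+1})], where (s₁, a₁, …, s_H, a_H) is a trajectory generated by π. -/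
open scoped RealInnerProductSpace
open Finset

/-- Lemma 3 (eq. (7)) of the paper: for any deterministic policy `π`, telescoping the Bellman
equation under the linear `Q^*` and ball-structure assumptions yields
`⟨φ(s₁), θ₁^*⟩ + E^π[Σ_{h=1}^H ⟨a_h, θ_h^*⟩]
  = E^π[Σ_{h=1}^H r(s_h, a_h)] + Θ · E^π[Σ_{h=1}^{H-1} ρ(s_{h+1})]`. -/
theorem telescoped_bellman {S : Type*} [Fintype S] [DecidableEq S] {d : ℕ} (H : ℕ) (hH : 1 ≤ H)
    (φ : S → EuclideanSpace ℝ (Fin d)) (ρ : S → ℝ) (hρ : ∀ s, 0 ≤ ρ s)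
    (P : S → EuclideanSpace ℝ (Fin d) → S → ℝ) (r : S → EuclideanSpace ℝ (Fin d) → ℝ)
    (hP0 : ∀ s a s', 0 ≤ P s a s') (hP1 : ∀ s a, ∑ s' : S, P s a s' = 1)
    (θ : ℕ → EuclideanSpace ℝ (Fin d)) (Θ : ℝ)
    (hΘ : ∀ h, 1 ≤ h → h ≤ H → ‖θ h‖ = Θ)
    -- linear Q* assumption together with the Bellman optimality equation:
    -- Q_h^*(s,a) = ⟨φ(s)+a, θ_h^*⟩ = r(s,a) + Σ_{s'} P(s'|s,a) V_{h+1}^*(s')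
    (hbellman : ∀ h, 1 ≤ h → h ≤ H → ∀ s a, ‖a‖ ≤ ρ s →
      ⟪φ s + a, θ h⟫ = r s a + ∑ s' : S, P s a s' * Vstar H φ ρ θ (h + 1) s')
    (π : ℕ → S → EuclideanSpace ℝ (Fin d)) (hπball : ∀ h s, ‖π h s‖ ≤ ρ s)
    (s₁ : S) :
    ⟪φ s₁, θ 1⟫ +
        ∑ h ∈ Finset.Icc 1 H, (∑ s : S, stateDist P π s₁ (h - 1) s * ⟪π h s, θ h⟫) =
      (∑ h ∈ Finset.Icc 1 H, (∑ s : S, stateDist P π s₁ (h - 1) s * r s (π h s))) +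
        Θ * ∑ h ∈ Finset.Icc 1 (H - 1), (∑ s : S, stateDist P π s₁ h s * ρ s) := by

  classical
  set D := stateDist P π s₁ with hD
  have hDstep : ∀ h : ℕ, 1 ≤ h → ∀ s' : S,
      D h s' = ∑ s : S, D (h - 1) s * P s (π h s) s' := by
    intro h hh s'
    obtain ⟨m, rfl⟩ : ∃ m, h = m + 1 := ⟨h - 1, (Nat.succ_pred_eq_of_pos hh).symm⟩
    simp [hD, stateDist]
  have key : ∀ h, 1 ≤ h → h ≤ H →
      (∑ s : S, D (h-1) s * ⟪φ s, θ h⟫) + (∑ s : S, D (h-1) s * ⟪π h s, θ h⟫)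
        = (∑ s : S, D (h-1) s * r s (π h s)) +
          (if h < H then (∑ s : S, D h s * ⟪φ s, θ (h+1)⟫) + Θ * (∑ s : S, D h s * ρ s)
            else 0) := by
    intro h h1 hH'
    have e1 : (∑ s : S, D (h-1) s * ⟪φ s, θ h⟫) + (∑ s : S, D (h-1) s * ⟪π h s, θ h⟫)
        = ∑ s : S, D (h-1) s * ⟪φ s + π h s, θ h⟫ := by
      simp_rw [inner_add_left, mul_add, Finset.sum_add_distrib]
    have e2 : ∀ s : S, ⟪φ s + π h s, θ h⟫
        = r s (π h s) + ∑ s' : S, P s (π h s) s' * Vstar H φ ρ θ (h+1) s' :=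
      fun s => hbellman h h1 hH' s (π h s) (hπball h s)
    rw [e1]
    simp_rw [e2, mul_add, Finset.sum_add_distrib]
    congr 1
    have e3 : ∑ s : S, D (h-1) s * ∑ s' : S, P s (π h s) s' * Vstar H φ ρ θ (h+1) s'
        = ∑ s' : S, D h s' * Vstar H φ ρ θ (h+1) s' := by
      simp_rw [Finset.mul_sum]
      rw [Finset.sum_comm]
      refine Finset.sum_congr rfl fun s' _ => ?_
      rw [hDstep h h1 s', Finset.sum_mul]
      exact Finset.sum_congr rfl fun s _ => by ring
    rw [e3]
    by_cases hlt : h < H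
    · rw [if_pos hlt]
      have hV : ∀ s' : S, Vstar H φ ρ θ (h+1) s' = ⟪φ s', θ (h+1)⟫ + ρ s' * Θ := by
        intro s'
        rw [Vstar, if_pos (by omega : h + 1 ≤ H), hΘ (h+1) (by omega) (by omega)]
      simp_rw [hV, mul_add, Finset.sum_add_distrib, Finset.mul_sum]
      congr 1
      exact Finset.sum_congr rfl fun s _ => by ring
    · rw [if_neg hlt]
      have hV : ∀ s' : S, Vstar H φ ρ θ (h+1) s' = 0 := by
        intro s'; rw [Vstar, if_neg (by omega)]
      simp [hV]
  have main : ∀ j, j < H →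
      (∑ s : S, D (H - j - 1) s * ⟪φ s, θ (H - j)⟫)
          + ∑ h ∈ Finset.Icc (H - j) H, (∑ s : S, D (h-1) s * ⟪π h s, θ h⟫)
        = (∑ h ∈ Finset.Icc (H - j) H, (∑ s : S, D (h-1) s * r s (π h s)))
          + Θ * ∑ h ∈ Finset.Icc (H - j) (H - 1), (∑ s : S, D h s * ρ s) := by
    intro j
    induction j with
    | zero =>
      intro _
      simp only [Nat.sub_zero]
      rw [Finset.Icc_self, Finset.Icc_eq_empty (by omega : ¬ H ≤ H - 1)]
      simp only [Finset.sum_singleton, Finset.sum_empty, mul_zero, add_zero]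
      have := key H hH le_rfl
      rw [if_neg (lt_irrefl H)] at this
      linarith
    | succ j ih =>
      intro hj
      have hk1 : 1 ≤ H - (j+1) := by omega
      have hkH : H - (j+1) ≤ H := by omega
      have hsucc : H - (j+1) + 1 = H - j := by omega
      have hins : Finset.Icc (H - (j+1)) H = insert (H - (j+1)) (Finset.Icc (H - j) H) := by
        rw [← hsucc]; ext x; simp only [Finset.mem_Icc, Finset.mem_insert]; omega
      have hins2 : Finset.Icc (H - (j+1)) (H - 1)
          = insert (H - (j+1)) (Finset.Icc (H - j) (H - 1)) := by
        rw [← hsucc]; ext x; simp only [Finset.mem_Icc, Finset.mem_insert]; omega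
      have hnm : H - (j+1) ∉ Finset.Icc (H - j) H := by
        simp [Finset.mem_Icc]; omega
      have hnm2 : H - (j+1) ∉ Finset.Icc (H - j) (H - 1) := by
        simp [Finset.mem_Icc]; omega
      rw [hins, hins2, Finset.sum_insert hnm, Finset.sum_insert hnm, Finset.sum_insert hnm2]
      have hkey := key (H - (j+1)) hk1 hkH
      rw [if_pos (by omega : H - (j+1) < H), hsucc] at hkey
      have hih := ih (by omega)
      have harg : H - j - 1 = H - (j+1) := by omega
      rw [harg] at hih
      rw [mul_add]
      linarith
  have h1 : H - (H - 1) = 1 := by omega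
  have hmain := main (H - 1) (by omega)
  rw [h1] at hmain
  have hA1 : (∑ s : S, D (1 - 1) s * ⟪φ s, θ 1⟫) = ⟪φ s₁, θ 1⟫ := by
    simp [hD, stateDist]
  rw [hA1] at hmain
  exact hmain
end
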